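/- arXiv:1107.1041 — 4 statements merged into one kernel-verified Lean document; each statement's English description precedes it below -/
import Mathlib

section
/- Let N = nm+2 and let (i,j) be an m-diagonal of a regular N-gon, written as (i, i+km+1) with 1 ≤ k and i < j. Then the m-diagonals (i,j) and (i-m, j-m) (endpoints taken modulo N) cross in the interior of the polygon; that is, writing i' = i-m and j' = j-m, either i' < i < j' < j or i < i' < j < j' holds (after normalizing representatives modulo N). -/
open Sym2

/-- A diagonal of the regular `N`-gon: an unordered pair of distinct, non-adjacent vertices. -/
def IsDiag (N : ℕ) (d : Sym2 (ZMod N)) : Prop :=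
  ∃ a b : ZMod N, d = s(a, b) ∧ a ≠ b ∧ a ≠ b + 1 ∧ b ≠ a + 1

/-- The translation τ on diagonals: subtract 1 from both endpoints. -/
def tauD (N : ℕ) (d : Sym2 (ZMod N)) : Sym2 (ZMod N) :=
  d.map (fun x => x - 1)

/-- The τ-orbit of a diagonal. -/
def tauOrbit (N : ℕ) (d : Sym2 (ZMod N)) : Set (Sym2 (ZMod N)) :=
  {e | ∃ k : ℤ, e = d.map (fun x => x - (k : ZMod N))}

/-- The τ^m-orbit of a diagonal. -/
def taumOrbit (N m : ℕ) (d : Sym2 (ZMod N)) : Set (Sym2 (ZMod N)) :=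
  {e | ∃ k : ℤ, e = d.map (fun x => x - (k : ZMod N) * (m : ZMod N))}

/-- Arrows of the translation quiver Γ of diagonals of the N-gon. -/
def GammaArrow (N : ℕ) (d d' : Sym2 (ZMod N)) : Prop :=
  IsDiag N d ∧ IsDiag N d' ∧
    ∃ a b : ZMod N, d = s(a, b) ∧ (d' = s(a, b + 1) ∨ d' = s(a + 1, b))

/-- A sectional path of length m in Γ. -/
def SectionalPath (N m : ℕ) (p : ℕ → Sym2 (ZMod N)) : Prop :=
  (∀ t < m, GammaArrow N (p t) (p (t + 1))) ∧
    ∀ t, 1 ≤ t → t < m → tauD N (p (t + 1)) ≠ p (t - 1)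

/-- Arrows of the m-th power quiver (Γ)^m: sectional paths of length m. -/
def PowArrow (N m : ℕ) (d d' : Sym2 (ZMod N)) : Prop :=
  ∃ p : ℕ → Sym2 (ZMod N), SectionalPath N m p ∧ p 0 = d ∧ p m = d'

/-- Two vertices lie in the same connected component of (Γ)^m. -/
def SameComponent (N m : ℕ) (d d' : Sym2 (ZMod N)) : Prop :=
  Relation.ReflTransGen (fun a b => PowArrow N m a b ∨ PowArrow N m b a) d d'

/-- The connected component of (Γ)^m containing a given diagonal. -/
def componentOf (N m : ℕ) (d : Sym2 (ZMod N)) : Set (Sym2 (ZMod N)) :=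
  {e | SameComponent N m d e}

/-- The set of connected components of (Γ)^m. -/
def components (N m : ℕ) : Set (Set (Sym2 (ZMod N))) :=
  {S | ∃ d, IsDiag N d ∧ S = componentOf N m d}

/-- The action of τ⁻¹ on the translation quiver ℤA_n (vertices (p,i)):
one horizontal unit to the right. -/
def tauInvZA (v : ℤ × ℤ) : ℤ × ℤ := (v.1 + 1, v.2)

/-- The action of the shift Σ on ℤA_n: Σ(p,i) = (p+i, n+1-i), a translation by
(n+1)/2 horizontal units composed with the vertical reflection i ↦ n+1-i. -/
def sigmaZA (n : ℕ) (v : ℤ × ℤ) : ℤ × ℤ := (v.1 + v.2, (n : ℤ) + 1 - v.2)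

/-- `x` lies strictly between `a` and `b` in the clockwise cyclic order on ℤ/N. -/
def CycBtw (N : ℕ) (a x b : ZMod N) : Prop :=
  0 < (x - a).val ∧ (x - a).val < (b - a).val

/-- The diagonals (a,b) and (c,d) cross: exactly one of c, d lies strictly
between a and b in the cyclic order. -/
def CrossD (N : ℕ) (a b c d : ZMod N) : Prop :=
  Xor' (CycBtw N a c b) (CycBtw N a d b)

/-- the m-diagonal (i, i+km+1) and its τ_m-translate
(i-m, i+km+1-m) cross inside the (nm+2)-gon. -/
theorem stmt_0 (n m : ℕ) (hn : 2 ≤ n) (hm : 1 ≤ m) (k : ℕ) (hk : 1 ≤ k)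
    (hk' : k + 1 ≤ n) (i : ZMod (n * m + 2)) :
    CrossD (n * m + 2) i (i + ((k * m + 1 : ℕ) : ZMod (n * m + 2)))
      (i - (m : ZMod (n * m + 2)))
      (i + ((k * m + 1 : ℕ) : ZMod (n * m + 2)) - (m : ZMod (n * m + 2))) := by
  haveI : NeZero (n * m + 2) := ⟨by omega⟩
  have hkm : k * m + 1 < n * m + 2 := by
    have : k * m ≤ (n - 1) * m := Nat.mul_le_mul_right m (by omega)
    have : (n - 1) * m ≤ n * m := Nat.mul_le_mul_right m (by omega)
    nlinarith [Nat.mul_le_mul_right m (show k ≤ n - 1 by omega),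
      Nat.sub_one_mul n m]
  have hmk : m ≤ k * m := Nat.le_mul_of_pos_left m (by omega)
  set c : ZMod (n * m + 2) := ((k * m + 1 : ℕ) : ZMod (n * m + 2)) with hc
  have hcval : c.val = k * m + 1 := ZMod.val_natCast_of_lt hkm
  have hcm : c - (m : ZMod (n * m + 2)) = ((k * m + 1 - m : ℕ) : ZMod (n * m + 2)) := by
    rw [hc]
    rw [Nat.cast_sub (by omega)]
  have hcmval : (c - (m : ZMod (n * m + 2))).val = k * m + 1 - m := by
    rw [hcm]
    exact ZMod.val_natCast_of_lt (by omega)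
  have hmne : (m : ZMod (n * m + 2)) ≠ 0 := by
    intro h
    have := ZMod.val_natCast_of_lt (show m < n * m + 2 by omega)
    rw [h, ZMod.val_zero] at this
    omega
  have hneg : (-(m : ZMod (n * m + 2))).val = n * m + 2 - m := by
    rw [ZMod.neg_val, if_neg hmne, ZMod.val_natCast_of_lt (show m < n * m + 2 by omega)]
  have h1 : i + c - i = c := by ring
  have h2 : i - (m : ZMod (n * m + 2)) - i = -(m : ZMod (n * m + 2)) := by ring
  have h3 : i + c - (m : ZMod (n * m + 2)) - i = c - (m : ZMod (n * m + 2)) := by ring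
  unfold CrossD CycBtw
  rw [h1, h2, h3, hcval, hcmval, hneg]
  right
  constructor
  · constructor
    · omega
    · omega
  · intro ⟨hA, hB⟩
    have : (n - 1) * m + 2 ≤ n * m + 2 - m := by
      have := Nat.sub_one_mul n m
      omega
    have hkle : k * m ≤ (n - 1) * m := Nat.mul_le_mul_right m (by omega)
    have := Nat.sub_one_mul n m
    omega
end

section
/- Let m be even, N = nm+2, and let {i,j} be a diagonal with |i−j| even (equivalently both endpoints of the same parity, not central). Then the τᵐ-orbit of {i,j} has cardinality N/2. -/
open Sym2

/-!
The τᵐ-orbit of `{i, j}` is the image of the cyclic subgroup `⟨m⟩ ≤ ℤ/N` under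
`t ↦ {i - t, j - t}`. That subgroup has order `N / gcd(N, m) = N / gcd(2, m) = N / 2`, and the
map is injective: a translation `t` that swaps `i` and `j` satisfies `t = j - i = i - j`, so
`2 (j - i) = 0`, which for `i ≠ j` means that `{i, j}` is central.
-/

theorem taumOrbit_eq_image_zmultiples (N m : ℕ) (d : Sym2 (ZMod N)) :
    taumOrbit N m d =
      (fun t => d.map (· - t)) '' (AddSubgroup.zmultiples (m : ZMod N) : Set (ZMod N)) := by
  ext e
  simp only [taumOrbit, Set.mem_ofPred_eq, Set.mem_image, SetLike.mem_coe,
    AddSubgroup.mem_zmultiples_iff, zsmul_eq_mul]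
  constructor
  · rintro ⟨k, rfl⟩
    exact ⟨_, ⟨k, rfl⟩, rfl⟩
  · rintro ⟨_, ⟨k, rfl⟩, rfl⟩
    exact ⟨k, rfl⟩

theorem Sym2.injective_map_sub {G : Type*} [AddCommGroup G] {i j : G}
    (h : i - j = j - i → i = j) : Function.Injective fun t => s(i, j).map (· - t) := by
  intro t u htu
  simp only [Sym2.map_mk, Sym2.eq_iff] at htu
  rcases htu with ⟨hi, -⟩ | ⟨hij, hji⟩
  · exact sub_right_injective hi
  · have hswap : i - j = j - i := by
      rw [← sub_sub_sub_cancel_right i j t, hij, hji, sub_sub_sub_cancel_right]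
    obtain rfl := h hswap
    exact sub_right_injective hij

theorem ZMod.eq_of_sub_eq_sub_swap {N : ℕ} {i j : ZMod N} (hj : (j - i).val ≠ N / 2)
    (h : i - j = j - i) : i = j := by
  rw [← neg_sub, ZMod.neg_eq_self_iff] at h
  rcases h with h | h
  · exact (sub_eq_zero.mp h).symm
  · omega

theorem ZMod.addOrderOf_natCast_mul_add (n m k : ℕ) (hk : k ≠ 0) :
    addOrderOf (m : ZMod (n * m + k)) = (n * m + k) / k.gcd m := by
  rw [ZMod.addOrderOf_coe m (by omega), Nat.gcd_mul_right_add_left]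

theorem stmt_4_general (n m : ℕ) (hm : Even m)
    (i j : ZMod (n * m + 2))
    (hnc : (j - i).val ≠ (n * m + 2) / 2) :
    (taumOrbit (n * m + 2) m s(i, j)).ncard = (n * m + 2) / 2 := by
  have hinj := Sym2.injective_map_sub (ZMod.eq_of_sub_eq_sub_swap hnc)
  rw [taumOrbit_eq_image_zmultiples, Set.ncard_image_of_injective _ hinj, ← Nat.card_coe_set_eq,
    SetLike.coe_sort_coe, Nat.card_zmultiples, ZMod.addOrderOf_natCast_mul_add n m 2 two_ne_zero,
    Nat.gcd_eq_left hm.two_dvd]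

/-- for m even and a non-central diagonal {i,j} with both
endpoints of the same parity, the τ^m-orbit of {i,j} has exactly N/2 elements. -/
theorem stmt_4 (n m : ℕ) (hn : 2 ≤ n) (hm : Even m) (hm1 : 1 ≤ m)
    (i j : ZMod (n * m + 2)) (hd : IsDiag (n * m + 2) s(i, j))
    (hpar : Even i.val ↔ Even j.val)
    (hnc : (j - i).val ≠ (n * m + 2) / 2) :
    (taumOrbit (n * m + 2) m s(i, j)).ncard = (n * m + 2) / 2 :=
  stmt_4_general n m hm i j hnc
end

section
/- Let m be even and N = nm+2. For a diagonal {1,j} with |1−j| odd and j ≠ j⁻ := N+2−j, the τᵐ-orbits of {1,j} and of {1,j⁻} are disjoint, and their union is the full τ-orbit of {1,j}; consequently the τᵐ-orbit of {1,j} has cardinality N/2. If j = j⁻ then the τ-orbit and τᵐ-orbit of {1,j} coincide and have cardinality N/2. -/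
open Sym2

section stmt6helpers

variable {N mm : ℕ} [NeZero N]

private def fD (N j : ℕ) : ZMod N → Sym2 (ZMod N) := fun t => s(1 - t, (j : ZMod N) - t)

private def Ev (N : ℕ) : Set (ZMod N) := {t | 2 ∣ t.val}

private lemma par_add (hNe : 2 ∣ N) (a b : ZMod N) :
    (2 ∣ (a + b).val) ↔ (2 ∣ a.val ↔ 2 ∣ b.val) := by
  rw [ZMod.val_add, Nat.dvd_mod_iff hNe]; omega

private lemma tauOrbit_eq (j : ℕ) :
    tauOrbit N s(1, (j : ZMod N)) = Set.range (fD N j) := by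
  ext e
  simp only [tauOrbit, Set.mem_setOf_eq, Set.mem_range, fD]
  constructor
  · rintro ⟨k, rfl⟩
    exact ⟨(k : ZMod N), by simp⟩
  · rintro ⟨t, rfl⟩
    refine ⟨(t.val : ℤ), ?_⟩
    have : (((t.val : ℤ)) : ZMod N) = t := by
      push_cast
      exact ZMod.natCast_rightInverse t
    simp [this]

private lemma shift_even (hNe : 2 ∣ N) (hme : 2 ∣ mm) (k : ℤ) :
    ((k : ZMod N) * (mm : ZMod N)) ∈ Ev N := by
  obtain ⟨m', rfl⟩ := hme
  have h1 : (k : ZMod N) * ((2 * m' : ℕ) : ZMod N)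
      = 2 * (((k : ZMod N) * (m' : ℕ))) := by push_cast; ring
  set w : ZMod N := (k : ZMod N) * (m' : ℕ) with hw
  have h2 : (2 : ZMod N) * w = ((2 * w.val : ℕ) : ZMod N) := by
    push_cast
    rw [ZMod.natCast_rightInverse w]
  show 2 ∣ ((k : ZMod N) * ((2 * m' : ℕ) : ZMod N)).val
  rw [h1, h2, ZMod.val_natCast, Nat.dvd_mod_iff hNe]
  omega

private lemma exists_k (hgcd : Nat.gcd mm N = 2) (t : ZMod N) (ht : t ∈ Ev N) :
    ∃ k : ℤ, (k : ZMod N) * (mm : ZMod N) = t := by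
  obtain ⟨s0, hs0⟩ := ht
  have hg : (mm : ℤ) * Int.gcdA mm N + (N : ℤ) * Int.gcdB mm N = 2 := by
    have h := (Int.gcd_eq_gcd_ab (mm : ℤ) (N : ℤ)).symm
    rwa [show Int.gcd (mm : ℤ) (N : ℤ) = Nat.gcd mm N from rfl, hgcd] at h
  refine ⟨(s0 : ℤ) * Int.gcdA mm N, ?_⟩
  have hg' : (mm : ZMod N) * ((Int.gcdA mm N : ℤ) : ZMod N)
      + ((N : ℕ) : ZMod N) * ((Int.gcdB mm N : ℤ) : ZMod N) = 2 := by
    exact_mod_cast congrArg (Int.cast : ℤ → ZMod N) hg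
  have hN0 : ((N : ℕ) : ZMod N) = 0 := ZMod.natCast_self N
  have hval : ((t.val : ℕ) : ZMod N) = t := ZMod.natCast_rightInverse t
  have h2s : ((2 * s0 : ℕ) : ZMod N) = t := by rw [← hs0, hval]
  push_cast
  push_cast at h2s
  linear_combination ((s0 : ZMod N)) * hg'
    - (s0 : ZMod N) * ((Int.gcdB mm N : ℤ) : ZMod N) * hN0 + h2s

private lemma taumOrbit_eq (hNe : 2 ∣ N) (hme : 2 ∣ mm) (hgcd : Nat.gcd mm N = 2) (j : ℕ) :
    taumOrbit N mm s(1, (j : ZMod N)) = fD N j '' Ev N := by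
  ext e
  simp only [taumOrbit, Set.mem_setOf_eq, Set.mem_image]
  constructor
  · rintro ⟨k, rfl⟩
    exact ⟨(k : ZMod N) * (mm : ZMod N), shift_even hNe hme k, by simp [fD]⟩
  · rintro ⟨t, ht, rfl⟩
    obtain ⟨k, hk⟩ := exists_k hgcd t ht
    exact ⟨k, by simp [fD, hk]⟩

private lemma odd_shift_val (hNe : 2 ∣ N) {j : ℕ} (hj : 3 ≤ j) (hjlt : j < N) (hje : 2 ∣ j) :
    ¬ (2 ∣ ((j : ZMod N) - 1).val) := by
  have h1 : ((j : ZMod N) - 1) = ((j - 1 : ℕ) : ZMod N) := by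
    have : ((j - 1 : ℕ) : ZMod N) = (j : ZMod N) - ((1 : ℕ) : ZMod N) := Nat.cast_sub (by omega)
    rw [this]; push_cast; ring
  rw [h1, ZMod.val_natCast_of_lt (by omega)]
  omega

private lemma add_odd_image (hNe : 2 ∣ N) (c : ZMod N) (hc : ¬ (2 ∣ c.val)) :
    (fun t => t + c) '' Ev N = (Ev N)ᶜ := by
  ext u
  simp only [Set.mem_image, Set.mem_compl_iff, Ev, Set.mem_setOf_eq]
  constructor
  · rintro ⟨t, ht, rfl⟩
    rw [par_add hNe]
    tauto
  · intro hu
    refine ⟨u - c, ?_, by ring⟩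
    by_contra h
    have := (par_add hNe (u - c) c).mpr (by tauto)
    simp only [sub_add_cancel] at this
    exact hu this

private lemma mirror_eq (hNe : 2 ∣ N) {j : ℕ} (hj : 3 ≤ j) (hjlt : j < N) (hje : 2 ∣ j) :
    ∀ t : ZMod N, fD N (N + 2 - j) t = fD N j (t + ((j : ZMod N) - 1)) := by
  have hc : ((N + 2 - j : ℕ) : ZMod N) = 2 - (j : ZMod N) := by
    have h1 : ((N + 2 - j : ℕ) : ZMod N) = ((N + 2 : ℕ) : ZMod N) - ((j : ℕ) : ZMod N) :=
      Nat.cast_sub (by omega)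
    rw [h1]
    push_cast [ZMod.natCast_self]
    ring
  intro t
  unfold fD
  rw [hc, Sym2.eq_iff]
  right
  constructor <;> ring

private lemma mirror_image (hNe : 2 ∣ N) {j : ℕ} (hj : 3 ≤ j) (hjlt : j < N) (hje : 2 ∣ j) :
    fD N (N + 2 - j) '' Ev N = fD N j '' (Ev N)ᶜ := by
  rw [← add_odd_image hNe _ (odd_shift_val hNe hj hjlt hje), ← Set.image_comp]
  exact Set.image_congr' (fun t => mirror_eq hNe hj hjlt hje t)

private lemma fD_inj {j : ℕ} (hj : 3 ≤ j) (hjlt : j < N) (hne : 2 * j ≠ N + 2) :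
    Function.Injective (fD N j) := by
  intro t t' h
  unfold fD at h
  rw [Sym2.eq_iff] at h
  rcases h with ⟨h1, _⟩ | ⟨h1, h2⟩
  · linear_combination -h1
  · exfalso
    have h3 : (2 : ZMod N) * (j : ZMod N) - 2 = 0 := by linear_combination h2 - h1
    have h4 : ((2 * j - 2 : ℕ) : ZMod N) = 0 := by
      rw [Nat.cast_sub (by omega)]
      push_cast
      linear_combination h3
    have h5 : N ∣ 2 * j - 2 := (ZMod.natCast_eq_zero_iff _ _).mp h4
    obtain ⟨c, hc⟩ := h5
    have hc2 : c < 2 := by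
      by_contra hcc
      push_neg at hcc
      have : N * 2 ≤ N * c := Nat.mul_le_mul_left N hcc
      omega
    interval_cases c <;> omega

private lemma fD_injOn_Ev (hNe : 2 ∣ N) {j : ℕ} (hj : 3 ≤ j) (hjlt : j < N) (hje : 2 ∣ j) :
    Set.InjOn (fD N j) (Ev N) := by
  intro t ht t' ht' h
  unfold fD at h
  rw [Sym2.eq_iff] at h
  rcases h with ⟨h1, _⟩ | ⟨h1, h2⟩
  · linear_combination -h1
  · exfalso
    have hodd := odd_shift_val hNe hj hjlt hje
    have heq : t' = t + ((j : ZMod N) - 1) := by linear_combination h1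
    have := (par_add hNe t ((j : ZMod N) - 1)).mp (by rw [← heq]; exact ht')
    simp only [Ev, Set.mem_setOf_eq] at ht ht'
    tauto

private lemma ncard_Ev (hNe : 2 ∣ N) : (Ev N).ncard = N / 2 := by
  have hN0 : 0 < N := Nat.pos_of_ne_zero (NeZero.ne N)
  have hrange : Ev N = Set.range (fun i : Fin (N / 2) => ((2 * (i : ℕ) : ℕ) : ZMod N)) := by
    ext t
    simp only [Ev, Set.mem_setOf_eq, Set.mem_range]
    constructor
    · rintro ⟨s, hs⟩
      have hlt : t.val < N := ZMod.val_lt t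
      refine ⟨⟨s, by omega⟩, ?_⟩
      show ((2 * s : ℕ) : ZMod N) = t
      rw [← hs]
      exact ZMod.natCast_rightInverse t
    · rintro ⟨i, rfl⟩
      rw [ZMod.val_natCast, Nat.dvd_mod_iff hNe]
      omega
  have hinj : Function.Injective (fun i : Fin (N / 2) => ((2 * (i : ℕ) : ℕ) : ZMod N)) := by
    intro a b hab
    have ha := ZMod.val_natCast_of_lt (show 2 * (a : ℕ) < N by omega)
    have hb := ZMod.val_natCast_of_lt (show 2 * (b : ℕ) < N by omega)
    have hab' : ((2 * (a : ℕ) : ℕ) : ZMod N) = ((2 * (b : ℕ) : ℕ) : ZMod N) := hab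
    have h2 := congrArg ZMod.val hab'
    rw [ha, hb] at h2
    exact Fin.ext (by omega)
  rw [hrange, ← Set.image_univ, Set.ncard_image_of_injective _ hinj, Set.ncard_univ]
  simp

private lemma fD_period {j : ℕ} (h2j : (2 : ZMod N) * (j : ZMod N) = 2) (t : ZMod N) :
    fD N j (t + ((j : ZMod N) - 1)) = fD N j t := by
  unfold fD
  rw [Sym2.eq_iff]
  right
  constructor
  · linear_combination -h2j
  · ring

end stmt6helpers

/-- for m even and j even (so |1-j| odd): if j ≠ j⁻ = N+2-j then
the τ^m-orbits of {1,j} and {1,j⁻} are disjoint, their union is the τ-orbit of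
{1,j}, and the τ^m-orbit of {1,j} has N/2 elements; if j = j⁻ then the τ-orbit
and the τ^m-orbit coincide and have N/2 elements. -/
theorem stmt_6 (n m : ℕ) (hn : 2 ≤ n) (hm : Even m) (hm1 : 1 ≤ m)
    (j : ℕ) (hj3 : 3 ≤ j) (hjN : j ≤ n * m + 1) (hje : Even j) :
    (j ≠ n * m + 4 - j →
      Disjoint
          (taumOrbit (n * m + 2) m s((1 : ZMod (n * m + 2)), (j : ZMod (n * m + 2))))
          (taumOrbit (n * m + 2) m
            s((1 : ZMod (n * m + 2)), ((n * m + 4 - j : ℕ) : ZMod (n * m + 2)))) ∧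
      taumOrbit (n * m + 2) m s((1 : ZMod (n * m + 2)), (j : ZMod (n * m + 2))) ∪
          taumOrbit (n * m + 2) m
            s((1 : ZMod (n * m + 2)), ((n * m + 4 - j : ℕ) : ZMod (n * m + 2))) =
        tauOrbit (n * m + 2) s((1 : ZMod (n * m + 2)), (j : ZMod (n * m + 2))) ∧
      (taumOrbit (n * m + 2) m
          s((1 : ZMod (n * m + 2)), (j : ZMod (n * m + 2)))).ncard = (n * m + 2) / 2) ∧
    (j = n * m + 4 - j →
      tauOrbit (n * m + 2) s((1 : ZMod (n * m + 2)), (j : ZMod (n * m + 2))) =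
        taumOrbit (n * m + 2) m s((1 : ZMod (n * m + 2)), (j : ZMod (n * m + 2))) ∧
      (taumOrbit (n * m + 2) m
          s((1 : ZMod (n * m + 2)), (j : ZMod (n * m + 2)))).ncard = (n * m + 2) / 2) := by
  haveI : NeZero (n * m + 2) := ⟨by omega⟩
  have hm2 : 2 ∣ m := hm.two_dvd
  have hje2 : 2 ∣ j := hje.two_dvd
  have hNe : 2 ∣ n * m + 2 := by
    obtain ⟨m', rfl⟩ := hm2
    exact ⟨n * m' + 1, by ring⟩
  have hgcd : Nat.gcd m (n * m + 2) = 2 := by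
    refine Nat.dvd_antisymm ?_ (Nat.dvd_gcd hm2 hNe)
    have ha : Nat.gcd m (n * m + 2) ∣ n * m := (Nat.gcd_dvd_left m (n * m + 2)).mul_left n
    have hb := Nat.gcd_dvd_right m (n * m + 2)
    have := Nat.dvd_sub hb ha
    simpa using this
  have hjlt : j < n * m + 2 := by omega
  have hS : taumOrbit (n * m + 2) m s((1 : ZMod (n * m + 2)), (j : ZMod (n * m + 2)))
      = fD (n * m + 2) j '' Ev (n * m + 2) := taumOrbit_eq hNe hm2 hgcd j
  constructor
  · intro hne
    have hne' : 2 * j ≠ n * m + 2 + 2 := by omega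
    have hT : taumOrbit (n * m + 2) m
        s((1 : ZMod (n * m + 2)), ((n * m + 4 - j : ℕ) : ZMod (n * m + 2)))
        = fD (n * m + 2) j '' (Ev (n * m + 2))ᶜ := by
      rw [show n * m + 4 - j = (n * m + 2) + 2 - j from by omega,
        taumOrbit_eq hNe hm2 hgcd, mirror_image hNe hj3 hjlt hje2]
    have hinj := fD_inj hj3 hjlt hne'
    refine ⟨?_, ?_, ?_⟩
    · rw [hS, hT, Set.disjoint_left]
      rintro e ⟨t, ht, rfl⟩ ⟨t', ht', heq⟩
      exact ht' (hinj heq ▸ ht)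
    · rw [hS, hT, ← Set.image_union, Set.union_compl_self, Set.image_univ, tauOrbit_eq]
    · rw [hS, Set.ncard_image_of_injective _ hinj, ncard_Ev hNe]
  · intro heqj
    have h2j : 2 * j = (n * m + 2) + 2 := by omega
    have h2jc : (2 : ZMod (n * m + 2)) * (j : ZMod (n * m + 2)) = 2 := by
      have h := congrArg (Nat.cast : ℕ → ZMod (n * m + 2)) h2j
      have hz : ((n * m + 2 : ℕ) : ZMod (n * m + 2)) = 0 := ZMod.natCast_self _
      push_cast at h hz
      linear_combination h + hz
    constructor
    · rw [hS, tauOrbit_eq]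
      refine subset_antisymm ?_ (Set.image_subset_range _ _)
      rintro e ⟨t, rfl⟩
      by_cases hpt : 2 ∣ t.val
      · exact ⟨t, hpt, rfl⟩
      · refine ⟨t + ((j : ZMod (n * m + 2)) - 1), ?_, fD_period h2jc t⟩
        have hodd := odd_shift_val hNe hj3 hjlt hje2
        show 2 ∣ (t + ((j : ZMod (n * m + 2)) - 1)).val
        rw [par_add hNe]
        tauto
    · rw [hS, Set.ncard_image_of_injOn (fD_injOn_Ev hNe hj3 hjlt hje2), ncard_Ev hNe]
end

section
/- Let m be even and let m/2 be odd, N = nm+2, j₀ = m/2 + 2 (so j₀ is odd). Then the τ-orbit of {1, j₀} meets exactly two connected components of (Γ_{A_{nm−1}})ᵐ, and in each such component the vertices {1, j₀} and {1, j₀⁻} (with j₀⁻ = N+2−j₀) both lie on the 1-column and lie in the same τᵐ-orbit; consequently each of these two components has the shape of a Möbius band (its underlying quiver is ℤA_n modulo an auto-equivalence involving an odd power of Σ). -/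
open Sym2

/-!
A diagonal of width `g` is joined in `(Γ)ᵐ` to its `τ⁻ᵐ`-translate by two sectional paths of
length `m` (move the far endpoint `m` steps, then the near one), so every `τᵐ`-orbit of such
diagonals lies in one component. As `N = nm + 2`, the multiples of `m` in `ℤ/N` are exactly the
even residues, hence the `τ`-orbit of `{1, j₀}` meets at most the components of `{1, j₀}` and
`τ{1, j₀}`. Conversely a sectional path never turns back, so an `m`-step moves one endpoint by the
even amount `m`, and the endpoints modulo 2 are a component invariant: both endpoints of `{1, j₀}`
are odd and both endpoints of `τ{1, j₀}` are even. Finally `{1, j₀⁻} = {1, 1 - (j₀ - 1)}` is the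
translate of `{1, j₀}` by the even amount `j₀ - 1`.
-/

lemma isDiag_add_natCast {N k : ℕ} (hk : 2 ≤ k) (hkN : k + 2 ≤ N) (c : ZMod N) :
    IsDiag N s(c, c + k) := by
  have cast_ne {i j : ℕ} (hi : i < N) (hj : j < N) (hij : i ≠ j) : (i : ZMod N) ≠ j := by
    rw [Ne, ZMod.natCast_eq_natCast_iff', Nat.mod_eq_of_lt hi, Nat.mod_eq_of_lt hj]
    exact hij
  refine ⟨c, c + k, rfl, fun h => ?_, fun h => ?_, fun h => ?_⟩
  · exact cast_ne (i := k) (j := 0) (by omega) (by omega) (by omega) (by simpa using h.symm)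
  · refine cast_ne (i := k + 1) (j := 0) (by omega) (by omega) (by omega) ?_
    push_cast
    linear_combination -h
  · exact cast_ne (i := k) (j := 1) (by omega) (by omega) (by omega) (by simpa using h)

lemma powArrow_of_forall_isDiag {N m : ℕ} {a b : ZMod N}
    (h : ∀ t ≤ m, IsDiag N s(a, b + t)) : PowArrow N m s(a, b) s(a, b + m) := by
  refine ⟨fun t => s(a, b + t), ⟨fun t ht => ?_, fun t ht1 htm => ?_⟩, by simp, rfl⟩
  · refine ⟨h t ht.le, h (t + 1) ht, a, b + t, rfl, Or.inl ?_⟩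
    push_cast
    ring_nf
  · obtain ⟨a', b', hab, hne, -, -⟩ := h t htm.le
    have : Nontrivial (ZMod N) := nontrivial_of_ne a' b' hne
    have hdiag : a ≠ b + t := by
      rintro rfl
      rcases Sym2.eq_iff.mp hab with ⟨rfl, rfl⟩ | ⟨rfl, rfl⟩ <;> simp at hne
    simp only [tauD, Sym2.map_mk, Nat.cast_sub ht1, Nat.cast_succ, Ne, Sym2.eq_iff]
    rintro (⟨h1, -⟩ | ⟨h1, -⟩)
    · simp at h1
    · exact hdiag (by linear_combination h1)

lemma sameComponent_symm {N m : ℕ} {d e : Sym2 (ZMod N)} (h : SameComponent N m d e) :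
    SameComponent N m e d := by
  induction h with
  | refl => exact .refl
  | tail _ hs ih => exact .head hs.symm ih

lemma componentOf_eq_of_sameComponent {N m : ℕ} {d e : Sym2 (ZMod N)}
    (h : SameComponent N m d e) : componentOf N m d = componentOf N m e := by
  ext x
  exact ⟨fun hx => (sameComponent_symm h).trans hx, fun hx => h.trans hx⟩

section

variable {N m g : ℕ}

lemma sameComponent_add_natCast (hg : 2 ≤ g) (hgm : g + m + 2 ≤ N) (c : ZMod N) :
    SameComponent N m s(c, c + g) s(c + m, c + m + g) := by
  have first : PowArrow N m s(c, c + g) s(c, c + g + m) :=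
    powArrow_of_forall_isDiag fun t ht => by
      simpa [add_assoc] using isDiag_add_natCast (k := g + t) (by omega) (by omega) c
  have second : PowArrow N m s(c + g + m, c) s(c + g + m, c + m) :=
    powArrow_of_forall_isDiag fun t ht => by
      have h := isDiag_add_natCast (k := g + m - t) (by omega) (by omega) (c + (t : ZMod N))
      rw [Nat.cast_sub (by omega), Sym2.eq_swap] at h
      push_cast at h
      convert h using 2
      ring
  refine .tail (.single (Or.inl first)) (Or.inl ?_)
  rwa [Sym2.eq_swap, Sym2.eq_swap (a := c + m), add_right_comm c (m : ZMod N)]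

lemma sameComponent_sub_natCast_mul (hg : 2 ≤ g) (hgm : g + m + 2 ≤ N) (c : ZMod N) (i : ℕ) :
    SameComponent N m s(c, c + g) s(c - i * m, c - i * m + g) := by
  induction i with
  | zero =>
    simp only [Nat.cast_zero, zero_mul, sub_zero]
    exact .refl
  | succ i ih =>
    have step := sameComponent_symm (sameComponent_add_natCast hg hgm (c - (i + 1 : ℕ) * m))
    rw [show c - ((i + 1 : ℕ) : ZMod N) * m + m = c - i * m by push_cast; ring] at step
    exact ih.trans step

lemma sameComponent_of_mem_taumOrbit (hg : 2 ≤ g) (hgm : g + m + 2 ≤ N) {c : ZMod N}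
    {e : Sym2 (ZMod N)} (he : e ∈ taumOrbit N m s(c, c + g)) :
    SameComponent N m s(c, c + g) e := by
  have : NeZero N := ⟨by omega⟩
  obtain ⟨k, rfl⟩ := he
  have h := sameComponent_sub_natCast_mul hg hgm c (k : ZMod N).val
  rw [ZMod.natCast_zmod_val] at h
  simpa [sub_add_eq_add_sub] using h

end

lemma GammaArrow.eq_of_tauD_ne {N : ℕ} {a b : ZMod N} {e : Sym2 (ZMod N)}
    (h : GammaArrow N s(a, b) e) (hsec : tauD N e ≠ s(a, b - 1)) : e = s(a, b + 1) := by
  obtain ⟨-, -, a', b', hab, he⟩ := h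
  rcases Sym2.eq_iff.mp hab with ⟨rfl, rfl⟩ | ⟨rfl, rfl⟩ <;> rcases he with rfl | rfl
  · rfl
  · exact absurd (by simp [tauD]) hsec
  · exact absurd (by simp [tauD, Sym2.eq_swap]) hsec
  · exact Sym2.eq_swap

lemma PowArrow.exists_eq_pair {N m : ℕ} (hm : 0 < m) {d d' : Sym2 (ZMod N)}
    (h : PowArrow N m d d') : ∃ a b : ZMod N, d = s(a, b) ∧ d' = s(a, b + m) := by
  obtain ⟨p, ⟨harr, hsec⟩, rfl, rfl⟩ := h
  obtain ⟨a, b, hp0, hp1⟩ : ∃ a b : ZMod N, p 0 = s(a, b) ∧ p 1 = s(a, b + 1) := by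
    obtain ⟨-, -, a, b, hp0, hp1 | hp1⟩ := harr 0 hm
    · exact ⟨a, b, hp0, hp1⟩
    · exact ⟨b, a, hp0.trans Sym2.eq_swap, hp1.trans Sym2.eq_swap⟩
  have walk : ∀ t < m, p t = s(a, b + t) ∧ p (t + 1) = s(a, b + (t + 1 : ℕ)) := by
    intro t
    induction t with
    | zero => simpa using fun _ => ⟨hp0, hp1⟩
    | succ t ih =>
      intro ht
      obtain ⟨hpt, hpt1⟩ := ih (by omega)
      refine ⟨hpt1, ?_⟩
      have hstep := harr (t + 1) ht
      rw [hpt1] at hstep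
      refine (hstep.eq_of_tauD_ne ?_).trans (by push_cast; ring_nf)
      simpa [hpt, ← add_assoc] using hsec (t + 1) (by omega) ht
  refine ⟨a, b, hp0, ?_⟩
  simpa [Nat.sub_add_cancel hm] using (walk (m - 1) (by omega)).2

lemma SameComponent.map_eq {N m : ℕ} {A : Type*} [AddMonoid A] (hm : 0 < m)
    (f : ZMod N →+ A) (hf : f m = 0) {d d' : Sym2 (ZMod N)} (h : SameComponent N m d d') :
    d.map f = d'.map f := by
  have arrow {x y : Sym2 (ZMod N)} (hxy : PowArrow N m x y) : x.map f = y.map f := by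
    obtain ⟨a, b, rfl, rfl⟩ := hxy.exists_eq_pair hm
    simp [hf]
  induction h with
  | refl => rfl
  | tail _ hstep ih => exact ih.trans (hstep.elim arrow fun h => (arrow h).symm)

lemma componentOf_ne_componentOf_tauD {N m g : ℕ} (hN : 2 ∣ N) (hm0 : 0 < m) (hm : Even m)
    (hg : Even g) (c : ZMod N) :
    componentOf N m s(c, c + g) ≠ componentOf N m (tauD N s(c, c + g)) := by
  intro hEq
  have hsame : SameComponent N m (tauD N s(c, c + g)) s(c, c + g) := by
    have hself : s(c, c + g) ∈ componentOf N m s(c, c + g) := .refl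
    rwa [hEq] at hself
  have heven {k : ℕ} (hk : Even k) : ZMod.castHom hN (ZMod 2) k = 0 := by
    simpa [ZMod.natCast_eq_zero_iff_even] using hk
  have := hsame.map_eq hm0 (ZMod.castHom hN (ZMod 2)).toAddMonoidHom (heven hm)
  simp only [tauD, Sym2.map_mk, RingHom.toAddMonoidHom_eq_coe,
    AddMonoidHom.coe_coe, map_sub, map_add, map_one, heven hg, add_zero] at this
  simp at this

section

variable {n m : ℕ}

/-- The witness comes from `2 = -n·m` in `ℤ/(nm+2)`. -/
lemma exists_intCast_mul_eq_of_even {j : ℤ} (hj : Even j) :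
    ∃ k : ℤ, (k : ZMod (n * m + 2)) * m = j := by
  obtain ⟨u, rfl⟩ := hj
  have hN : ((n * m + 2 : ℕ) : ZMod (n * m + 2)) = 0 := ZMod.natCast_self _
  push_cast at hN
  exact ⟨-n * u, by push_cast; linear_combination (-u) * hN⟩

lemma map_sub_mem_taumOrbit_of_even (d : Sym2 (ZMod (n * m + 2))) {j : ℤ} (hj : Even j) :
    d.map (· - (j : ZMod (n * m + 2))) ∈ taumOrbit (n * m + 2) m d := by
  obtain ⟨k, hk⟩ := exists_intCast_mul_eq_of_even (n := n) (m := m) hj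
  exact ⟨k, by rw [hk]⟩

lemma mirror_mem_taumOrbit (c : ZMod (n * m + 2)) {g : ℕ} (hg : Even g) :
    s(c, c - g) ∈ taumOrbit (n * m + 2) m s(c, c + g) := by
  have h := map_sub_mem_taumOrbit_of_even (m := m) s(c, c + g) (j := g) (by exact_mod_cast hg)
  rwa [Sym2.map_mk, Int.cast_natCast, add_sub_cancel_right, Sym2.eq_swap (a := c - g)] at h

lemma components_meeting_tauOrbit {g : ℕ} (hg : 2 ≤ g) (hgm : g + m + 2 ≤ n * m + 2)
    (c : ZMod (n * m + 2)) :
    {S | S ∈ components (n * m + 2) m ∧ ∃ e ∈ S, e ∈ tauOrbit (n * m + 2) s(c, c + g)} =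
      {componentOf (n * m + 2) m s(c, c + g),
        componentOf (n * m + 2) m (tauD (n * m + 2) s(c, c + g))} := by
  have htau : tauD (n * m + 2) s(c, c + g) = s(c - 1, c - 1 + g) := by
    rw [tauD, Sym2.map_mk, sub_add_eq_add_sub]
  have hdiag (c' : ZMod (n * m + 2)) : IsDiag (n * m + 2) s(c', c' + g) :=
    isDiag_add_natCast hg (by omega) c'
  ext S
  constructor
  · rintro ⟨⟨d, -, rfl⟩, e, hde, k, rfl⟩
    rw [componentOf_eq_of_sameComponent hde]
    rcases Int.even_or_odd k with hk | hk
    · exact .inl (componentOf_eq_of_sameComponent (sameComponent_of_mem_taumOrbit hg hgm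
        (map_sub_mem_taumOrbit_of_even _ hk))).symm
    · have hk' : Even (k - 1) := by simpa using hk.sub_odd odd_one
      have he : s(c, c + g).map (· - (k : ZMod (n * m + 2))) =
          (tauD (n * m + 2) s(c, c + g)).map (· - ((k - 1 : ℤ) : ZMod (n * m + 2))) := by
        rw [tauD, Sym2.map_map]
        congr 1
        funext x
        simp only [Function.comp_apply, Int.cast_sub, Int.cast_one]
        ring
      rw [he, htau]
      exact .inr (componentOf_eq_of_sameComponent (sameComponent_of_mem_taumOrbit hg hgm
        (map_sub_mem_taumOrbit_of_even _ hk'))).symm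
  · rintro (rfl | rfl)
    · exact ⟨⟨_, hdiag c, rfl⟩, _, .refl, 0, by simp⟩
    · exact ⟨⟨_, htau ▸ hdiag (c - 1), rfl⟩, _, .refl, 1, by simp [tauD]⟩

end

/-- for m even with m/2 odd and j₀ = m/2+2, the τ-orbit of
{1, j₀} meets exactly two connected components of (Γ_{A_{nm-1}})^m, and
{1, j₀} and its mirror {1, j₀⁻} (j₀⁻ = N+2-j₀) lie in the same component and
even in the same τ^m-orbit, producing the Möbius-band shape of these two
components. -/
theorem stmt_15 (n m : ℕ) (hn : 2 ≤ n) (hm : Even m) (hmo : Odd (m / 2)) :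
    {S | S ∈ components (n * m + 2) m ∧
        ∃ e ∈ S, e ∈ tauOrbit (n * m + 2)
          s((1 : ZMod (n * m + 2)), ((m / 2 + 2 : ℕ) : ZMod (n * m + 2)))}.ncard = 2 ∧
    s((1 : ZMod (n * m + 2)), ((n * m + 4 - (m / 2 + 2) : ℕ) : ZMod (n * m + 2))) ∈
      taumOrbit (n * m + 2) m
        s((1 : ZMod (n * m + 2)), ((m / 2 + 2 : ℕ) : ZMod (n * m + 2))) ∧
    SameComponent (n * m + 2) m
      s((1 : ZMod (n * m + 2)), ((m / 2 + 2 : ℕ) : ZMod (n * m + 2)))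
      s((1 : ZMod (n * m + 2)), ((n * m + 4 - (m / 2 + 2) : ℕ) : ZMod (n * m + 2))) := by
  have hs : 0 < m / 2 := hmo.pos
  have hwidth : m / 2 + 1 + m + 2 ≤ n * m + 2 := by
    have := Nat.mul_le_mul_right m hn
    omega
  have hj₀ : ((m / 2 + 2 : ℕ) : ZMod (n * m + 2)) = 1 + ((m / 2 + 1 : ℕ) : ZMod (n * m + 2)) := by
    push_cast
    ring
  have hj₀' : ((n * m + 4 - (m / 2 + 2) : ℕ) : ZMod (n * m + 2)) =
      1 - ((m / 2 + 1 : ℕ) : ZMod (n * m + 2)) := by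
    have hN : ((n * m + 2 : ℕ) : ZMod (n * m + 2)) = 0 := ZMod.natCast_self _
    rw [Nat.cast_sub (by omega)]
    push_cast at hN ⊢
    linear_combination hN
  have hmirror := mirror_mem_taumOrbit (n := n) (m := m) 1 hmo.add_one
  rw [hj₀, hj₀']
  refine ⟨?_, hmirror, sameComponent_of_mem_taumOrbit (by omega) hwidth hmirror⟩
  rw [components_meeting_tauOrbit (by omega) hwidth]
  exact Set.ncard_pair (componentOf_ne_componentOf_tauD ((hm.mul_left n).add even_two).two_dvd
    (by omega) hm hmo.add_one 1)
end
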